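/- Let (Ω, F, P) be a probability space, B ⊆ F a sub-σ-algebra, and φ : E → ℝ differentiable and strictly convex on a finite-dimensional real inner product space E, with Bregman loss D_φ(x, y) := φ(x) − φ(y) − ⟨x − y, ∇φ(y)⟩. Let q : Ω → E be F-measurable with q, φ∘q, and ∇φ∘q integrable in the required sense. Then for every B-measurable q̂ : Ω → E such that D_φ(q, q̂) is integrable, one has E[D_φ(q, E(q | B))] ≤ E[D_φ(q, q̂)]; i.e. the conditional expectation E(q | B) minimizes the expected Bregman loss over all B-measurable random variables. -/

import Mathlib

open MeasureTheory InnerProductSpace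

section Aux

variable {E : Type*} [NormedAddCommGroup E] [InnerProductSpace ℝ E]

lemma bregman_aux_grad_ineq [CompleteSpace E] (φ : E → ℝ) (hdiff : Differentiable ℝ φ)
    (hconv : ConvexOn ℝ Set.univ φ) (x y : E) :
    (inner ℝ (x - y) (gradient φ y) : ℝ) ≤ φ x - φ y := by
  have hc : HasDerivAt (fun t : ℝ => y + t • (x - y)) (x - y) 0 := by
    simpa using ((hasDerivAt_id (0:ℝ)).smul_const (x - y)).const_add y
  have hφc : HasDerivAt (fun t : ℝ => φ (y + t • (x - y))) (fderiv ℝ φ y (x - y)) 0 := by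
    have := (hdiff (y + (0:ℝ) • (x - y))).hasFDerivAt.comp_hasDerivAt 0 hc
    simpa [Function.comp_def] using this
  have hconv' : ConvexOn ℝ Set.univ (fun t : ℝ => φ (y + t • (x - y))) := by
    have h := hconv.comp_affineMap (AffineMap.lineMap y x : ℝ →ᵃ[ℝ] E)
    have heq : (φ ∘ (AffineMap.lineMap y x : ℝ →ᵃ[ℝ] E)) = fun t : ℝ => φ (y + t • (x - y)) := by
      funext t
      simp [AffineMap.lineMap_apply, add_comm]
    have hpre : ((AffineMap.lineMap y x : ℝ →ᵃ[ℝ] E) ⁻¹' Set.univ) = (Set.univ : Set ℝ) := by simp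
    rw [heq, hpre] at h
    exact h
  have hle := hconv'.le_slope_of_hasDerivAt (Set.mem_univ (0:ℝ)) (Set.mem_univ 1) one_pos hφc
  have hslope : slope (fun t : ℝ => φ (y + t • (x - y))) 0 1 = φ x - φ y := by
    rw [slope_def_field]
    simp
  have hgrad : (inner ℝ (x - y) (gradient φ y) : ℝ) = fderiv ℝ φ y (x - y) := by
    rw [real_inner_comm, ← InnerProductSpace.toDual_apply_apply]
    simp [gradient]
  rw [hgrad]
  rw [hslope] at hle
  exact hle

lemma condexp_inner_const_aux {Ω : Type*} {F : MeasurableSpace Ω} {P : Measure Ω}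
    [IsFiniteMeasure P] {B : MeasurableSpace Ω} (hB : B ≤ F)
    [CompleteSpace E] {q : Ω → E} (hq : Integrable q P) (c : E) :
    P[fun ω => (inner ℝ c (q ω) : ℝ)|B] =ᵐ[P] fun ω => (inner ℝ c ((P[q|B]) ω) : ℝ) := by
  haveI : SigmaFinite (P.trim hB) := inferInstance
  have hmi : Integrable (P[q|B]) P := integrable_condExp
  refine (ae_eq_condExp_of_forall_setIntegral_eq hB (hq.const_inner c) ?_ ?_ ?_).symm
  · intro s hs hμs
    exact (hmi.const_inner c).restrict
  · intro s hs hμs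
    have h1 : Integrable (P[q|B]) (P.restrict s) := hmi.restrict
    have h2 : Integrable q (P.restrict s) := hq.restrict
    rw [integral_inner h1 c, setIntegral_condExp hB hq hs, ← integral_inner h2 c]
  · have hsm : StronglyMeasurable[B] (P[q|B]) := stronglyMeasurable_condExp
    exact hsm.aestronglyMeasurable.const_inner

lemma wrap_integral_indicator {Ω : Type*} (F : MeasurableSpace Ω) (μ : Measure Ω) {s : Set Ω}
    (hs : MeasurableSet[F] s) (f : Ω → ℝ) :
    ∫ ω, s.indicator f ω ∂μ = ∫ ω in s, f ω ∂μ := integral_indicator hs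

lemma wrap_setIntegral_nonneg {Ω : Type*} (F : MeasurableSpace Ω) (μ : Measure Ω) {s : Set Ω}
    {f : Ω → ℝ} (hs : MeasurableSet[F] s) (hf : ∀ ω ∈ s, 0 ≤ f ω) :
    0 ≤ ∫ ω in s, f ω ∂μ := setIntegral_nonneg hs hf

lemma wrap_tendsto_setIntegral {Ω : Type*} (F : MeasurableSpace Ω) (μ : Measure Ω)
    {s : ℕ → Set Ω} {f : Ω → ℝ} (hsm : ∀ i, MeasurableSet[F] (s i)) (hmono : Monotone s)
    (hfi : IntegrableOn f (⋃ n, s n) μ) :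
    Filter.Tendsto (fun i => ∫ ω in s i, f ω ∂μ) Filter.atTop
      (nhds (∫ ω in ⋃ n, s n, f ω ∂μ)) := tendsto_setIntegral_of_monotone hsm hmono hfi

end Aux

/-- The conditional expectation `E(q | B)` minimizes the expected Bregman loss
`E[D_φ(q, q̂)]` over all `B`-measurable random variables `q̂`, where
`D_φ(x, y) := φ(x) − φ(y) − ⟨x − y, ∇φ(y)⟩` is the Bregman loss of a differentiable
strictly convex function `φ` on a finite-dimensional real inner product space. -/
theorem condexp_minimizes_expected_bregman_loss
    {Ω : Type*} {B : MeasurableSpace Ω} {F : MeasurableSpace Ω} {P : Measure Ω} [IsProbabilityMeasure P]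
    (hB : B ≤ F)
    {E : Type*} [NormedAddCommGroup E] [InnerProductSpace ℝ E] [FiniteDimensional ℝ E]
    [MeasurableSpace E] [BorelSpace E]
    (φ : E → ℝ) (hdiff : Differentiable ℝ φ) (hconv : StrictConvexOn ℝ Set.univ φ)
    (D : E → E → ℝ)
    (hD : ∀ x y : E, D x y = φ x - φ y - inner ℝ (x - y) (gradient φ y))
    (q : Ω → E) (hq_meas : Measurable q)
    (hq_int : Integrable q P)
    (hφq_int : Integrable (fun ω => φ (q ω)) P)
    (hgradq_int : Integrable (fun ω => gradient φ (q ω)) P) :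
    ∀ qhat : Ω → E, StronglyMeasurable[B] qhat →
      Integrable (fun ω => D (q ω) (qhat ω)) P →
      ∫ ω, D (q ω) ((P[q|B]) ω) ∂P ≤ ∫ ω, D (q ω) (qhat ω) ∂P := by
  intro qhat hqhat_sm hDqhat_int
  classical
  haveI : SigmaFinite (P.trim hB) := inferInstance
  have hD_nonneg : ∀ x y : E, 0 ≤ D x y := fun x y => by
    have h := bregman_aux_grad_ineq φ hdiff hconv.convexOn x y
    rw [hD]; linarith
  by_cases hDm_int : Integrable (fun ω => D (q ω) ((P[q|B]) ω)) P
  swap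
  · rw [integral_undef hDm_int]
    exact integral_nonneg fun ω => hD_nonneg _ _
  set m : Ω → E := P[q|B] with hm_def
  have hm_smB : StronglyMeasurable[B] m := stronglyMeasurable_condExp
  have hm_int : Integrable m P := integrable_condExp
  have hm_measB : Measurable[B] m := hm_smB.measurable
  have hqhat_measB : Measurable[B] qhat := hqhat_sm.measurable
  have hgradmeas : Measurable (fun y : E => gradient φ y) :=
    ((InnerProductSpace.toDual ℝ E).symm.continuous.measurable).comp (measurable_fderiv ℝ φ)
  set w : Ω → E := fun ω => gradient φ (m ω) - gradient φ (qhat ω) with hw_def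
  have hw_measB : Measurable[B] w :=
    (hgradmeas.comp hm_measB).sub (hgradmeas.comp hqhat_measB)
  have hw_measF : Measurable[F] w := hw_measB.mono hB le_rfl
  set g : Ω → ℝ := fun ω => D (q ω) (qhat ω) - D (q ω) (m ω) with hg_def
  have hg_int : Integrable g P := hDqhat_int.sub hDm_int
  have hqm_int : Integrable (fun ω => q ω - m ω) P := hq_int.sub hm_int
  have hqm_sm : AEStronglyMeasurable[F] (fun ω => q ω - m ω) P := hqm_int.1
  have hkey : ∀ ω, g ω = D (m ω) (qhat ω) + inner ℝ (q ω - m ω) (w ω) := by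
    intro ω
    simp only [hg_def, hw_def, hD, inner_sub_left, inner_sub_right]
    ring
  set A : ℕ → Set Ω := fun n => {ω | ‖w ω‖ ≤ (n : ℝ)} with hA_def
  have hA_measB : ∀ n, MeasurableSet[B] (A n) := fun n =>
    measurableSet_le (measurable_norm.comp hw_measB) measurable_const
  have hA_measF : ∀ n, MeasurableSet[F] (A n) := fun n => hB _ (hA_measB n)
  have hA_mono : Monotone A := fun i j hij ω hω =>
    show ‖w ω‖ ≤ (j : ℝ) from le_trans hω (Nat.cast_le.mpr hij)
  have hA_union : (⋃ n, A n) = Set.univ := by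
    ext ω
    simp only [Set.mem_iUnion, Set.mem_univ, iff_true]
    obtain ⟨n, hn⟩ := exists_nat_ge ‖w ω‖
    exact ⟨n, hn⟩
  have hinner_intOn : ∀ n : ℕ,
      Integrable (fun ω => (inner ℝ (q ω - m ω) (w ω) : ℝ)) (P.restrict (A n)) := by
    intro n
    refine Integrable.mono' ((hqm_int.norm.const_mul (n : ℝ)).restrict) ?_ ?_
    · exact (hqm_sm.inner (hw_measF.stronglyMeasurable.aestronglyMeasurable)).restrict
    · filter_upwards [ae_restrict_mem (hA_measF n)] with ω hω
      calc ‖(inner ℝ (q ω - m ω) (w ω) : ℝ)‖ ≤ ‖q ω - m ω‖ * ‖w ω‖ := norm_inner_le_norm _ _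
        _ ≤ ‖q ω - m ω‖ * n := by
            have : ‖w ω‖ ≤ (n : ℝ) := hω
            exact mul_le_mul_of_nonneg_left this (norm_nonneg _)
        _ = (n : ℝ) * ‖q ω - m ω‖ := mul_comm _ _
  -- conditional expectation of inner products with basis vectors
  have hcond_zero : ∀ c : E, P[fun ω => (inner ℝ (q ω - m ω) c : ℝ)|B] =ᵐ[P] 0 := by
    intro c
    have h1 : (fun ω => (inner ℝ (q ω - m ω) c : ℝ))
        = (fun ω => (inner ℝ (c : E) (q ω) : ℝ)) - (fun ω => (inner ℝ c (m ω) : ℝ)) := by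
      funext ω
      rw [Pi.sub_apply, real_inner_comm]
      simp [inner_sub_right]
    rw [h1]
    have h2 : P[(fun ω => (inner ℝ (c : E) (q ω) : ℝ)) - (fun ω => (inner ℝ c (m ω) : ℝ))|B]
        =ᵐ[P] P[fun ω => (inner ℝ (c : E) (q ω) : ℝ)|B] - P[fun ω => (inner ℝ c (m ω) : ℝ)|B] :=
      condExp_sub (hq_int.const_inner c) (hm_int.const_inner c) B
    refine h2.trans ?_
    have h3 := condexp_inner_const_aux hB hq_int c
    have h4 : P[fun ω => (inner ℝ c (m ω) : ℝ)|B] = fun ω => (inner ℝ c (m ω) : ℝ) :=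
      condExp_of_stronglyMeasurable hB
        (stronglyMeasurable_const.inner hm_smB) (hm_int.const_inner c)
    rw [h4]
    filter_upwards [h3] with ω hω
    simp [hω, hm_def]
  have hinner_zero : ∀ n : ℕ,
      ∫ ω in A n, (inner ℝ (q ω - m ω) (w ω) : ℝ) ∂P = 0 := by
    intro n
    have b := stdOrthonormalBasis ℝ E
    have hsum : ∀ ω, (inner ℝ (q ω - m ω) (w ω) : ℝ) =
        ∑ i, (inner ℝ (q ω - m ω) (b i) : ℝ) * (inner ℝ (b i) (w ω) : ℝ) := fun ω =>
      (b.sum_inner_mul_inner _ _).symm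
    have hterm_int : ∀ i, Integrable
        (fun ω => (inner ℝ (q ω - m ω) (b i) : ℝ) * (inner ℝ (b i) (w ω) : ℝ))
        (P.restrict (A n)) := by
      intro i
      refine Integrable.mono' ((hqm_int.norm.const_mul (n : ℝ)).restrict) ?_ ?_
      · exact ((hqm_sm.inner aestronglyMeasurable_const).mul
          (((measurable_const.inner hw_measF).aestronglyMeasurable))).restrict
      · filter_upwards [ae_restrict_mem (hA_measF n)] with ω hω
        have hb1 : ‖b i‖ = 1 := b.orthonormal.1 i
        have e1 : ‖(inner ℝ (q ω - m ω) (b i) : ℝ)‖ ≤ ‖q ω - m ω‖ := by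
          have := norm_inner_le_norm (𝕜 := ℝ) (q ω - m ω) (b i)
          rwa [hb1, mul_one] at this
        have e2 : ‖(inner ℝ (b i) (w ω) : ℝ)‖ ≤ (n : ℝ) := by
          refine le_trans ?_ (hω : ‖w ω‖ ≤ (n : ℝ))
          have := norm_inner_le_norm (𝕜 := ℝ) (b i) (w ω)
          rwa [hb1, one_mul] at this
        calc ‖(inner ℝ (q ω - m ω) (b i) : ℝ) * (inner ℝ (b i) (w ω) : ℝ)‖
            = ‖(inner ℝ (q ω - m ω) (b i) : ℝ)‖ * ‖(inner ℝ (b i) (w ω) : ℝ)‖ := norm_mul _ _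
          _ ≤ ‖q ω - m ω‖ * (n : ℝ) := by
              exact mul_le_mul e1 e2 (norm_nonneg _) (norm_nonneg _)
          _ = (n : ℝ) * ‖q ω - m ω‖ := mul_comm _ _
    have hterm_zero : ∀ i,
        ∫ ω in A n, (inner ℝ (q ω - m ω) (b i) : ℝ) * (inner ℝ (b i) (w ω) : ℝ) ∂P = 0 := by
      intro i
      set Fi : Ω → ℝ := (A n).indicator (fun ω => (inner ℝ (b i) (w ω) : ℝ)) with hFi_def
      set Gi : Ω → ℝ := fun ω => (inner ℝ (q ω - m ω) (b i) : ℝ) with hGi_def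
      have hstep : ∫ ω in A n, Gi ω * (inner ℝ (b i) (w ω) : ℝ) ∂P
          = ∫ ω, Fi ω * Gi ω ∂P := by
        rw [← wrap_integral_indicator F P (hA_measF n)]
        congr 1
        funext ω
        by_cases hω : ω ∈ A n <;> simp [hFi_def, hω, mul_comm]
      have hFi_sm : StronglyMeasurable[B] Fi :=
        ((measurable_const.inner hw_measB).stronglyMeasurable).indicator (hA_measB n)
      have hGi_int : Integrable Gi P := hqm_int.inner_const (b i)
      have hFi_bound : ∀ ω, ‖Fi ω‖ ≤ (n : ℝ) := by
        intro ω
        by_cases hω : ω ∈ A n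
        · simp only [hFi_def, Set.indicator_of_mem hω]
          refine le_trans ?_ (hω : ‖w ω‖ ≤ (n : ℝ))
          have hb1 : ‖b i‖ = 1 := b.orthonormal.1 i
          have := norm_inner_le_norm (𝕜 := ℝ) (b i) (w ω)
          rwa [hb1, one_mul] at this
        · simp [hFi_def, Set.indicator_of_notMem hω]
      have hFG_int : Integrable (Fi * Gi) P :=
        hGi_int.bdd_mul (c := (n : ℝ)) ((hFi_sm.mono hB).aestronglyMeasurable)
          (Filter.Eventually.of_forall hFi_bound)
      have hpull : P[Fi * Gi|B] =ᵐ[P] Fi * P[Gi|B] :=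
        condExp_stronglyMeasurable_mul_of_bound hB hFi_sm hGi_int (n : ℝ)
          (Filter.Eventually.of_forall hFi_bound)
      have hG0 : P[Gi|B] =ᵐ[P] 0 := hcond_zero (b i)
      have : ∫ ω, Fi ω * Gi ω ∂P = 0 := by
        have e1 : ∫ ω, (Fi * Gi) ω ∂P = ∫ ω, (P[Fi * Gi|B]) ω ∂P :=
          (integral_condExp hB).symm
        have e2 : ∫ ω, (P[Fi * Gi|B]) ω ∂P = ∫ ω, (Fi * P[Gi|B]) ω ∂P :=
          integral_congr_ae hpull
        have e3 : ∫ ω, (Fi * P[Gi|B]) ω ∂P = 0 := by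
          have : (Fi * P[Gi|B]) =ᵐ[P] 0 := by
            filter_upwards [hG0] with ω hω
            simp [Pi.mul_apply, hω]
          rw [integral_congr_ae this]
          simp
        simpa using e1.trans (e2.trans e3)
      rw [hstep]
      exact this
    calc ∫ ω in A n, (inner ℝ (q ω - m ω) (w ω) : ℝ) ∂P
        = ∫ ω in A n, ∑ i, (inner ℝ (q ω - m ω) (b i) : ℝ) * (inner ℝ (b i) (w ω) : ℝ) ∂P := by
          refine integral_congr_ae (Filter.Eventually.of_forall fun ω => hsum ω)
      _ = ∑ i, ∫ ω in A n, (inner ℝ (q ω - m ω) (b i) : ℝ) * (inner ℝ (b i) (w ω) : ℝ) ∂P :=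
          integral_finset_sum _ fun i _ => hterm_int i
      _ = 0 := by simp [hterm_zero]
  have hDmq_intOn : ∀ n, Integrable (fun ω => D (m ω) (qhat ω)) (P.restrict (A n)) := by
    intro n
    have heq : (fun ω => D (m ω) (qhat ω))
        = fun ω => g ω - inner ℝ (q ω - m ω) (w ω) := by
      funext ω
      rw [hkey ω]; ring
    rw [heq]
    exact hg_int.restrict.sub (hinner_intOn n)
  have hsetg : ∀ n, 0 ≤ ∫ ω in A n, g ω ∂P := by
    intro n
    have hsplit : ∫ ω in A n, g ω ∂P
        = ∫ ω in A n, D (m ω) (qhat ω) ∂P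
          + ∫ ω in A n, (inner ℝ (q ω - m ω) (w ω) : ℝ) ∂P := by
      rw [← integral_add (hDmq_intOn n) (hinner_intOn n)]
      exact integral_congr_ae (Filter.Eventually.of_forall fun ω => hkey ω)
    rw [hsplit, hinner_zero n, add_zero]
    exact wrap_setIntegral_nonneg F P (hA_measF n) fun ω _ => hD_nonneg _ _
  have htend : Filter.Tendsto (fun n => ∫ ω in A n, g ω ∂P) Filter.atTop (nhds (∫ ω, g ω ∂P)) := by
    have h := wrap_tendsto_setIntegral F P hA_measF hA_mono
      (by rw [hA_union]; exact hg_int.restrict)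
    rwa [hA_union, Measure.restrict_univ] at h
  have h0 : 0 ≤ ∫ ω, g ω ∂P := ge_of_tendsto' htend hsetg
  have hsub : ∫ ω, g ω ∂P
      = ∫ ω, D (q ω) (qhat ω) ∂P - ∫ ω, D (q ω) (m ω) ∂P :=
    integral_sub hDqhat_int hDm_int
  linarith [hsub ▸ h0]
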